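/- Let a > 0, η ∈ (2/3, 1), p > 1, and t ≥ 0, and define R_p(z) := a/(z − p) + (p − p^η)/(z − ip) + (p − p^η)/(z + ip). Then R_p(p + pt) is real and R_p(p + pt) ≥ 1 if and only if p·t³ + (2p^η − a)·t² + 2(p^η − a)·t ≤ 2a. Moreover, there exists p_0 = p_0(a, η) such that for all p > p_0, the set {z ∈ ℂ : |R_p(z)| ≥ 1} contains the real interval [p, p + a·p^{1−η}/2]. -/

import Mathlib

open MeasureTheory Metric Complex Set Topology Filter OnePoint
open scoped Classical

noncomputable section

/-- The Riemann sphere, modeled as the one-point compactification of `ℂ`. -/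
abbrev RS : Type := OnePoint ℂ

instance : MeasurableSpace RS := borel RS
instance : BorelSpace RS := ⟨rfl⟩

/-- The finite part of a point of the Riemann sphere (junk value `0` at `∞`). -/
def sphToC (z : RS) : ℂ := if h : ∃ x : ℂ, (x : RS) = z then h.choose else 0

/-- The inversion `z ↦ 1/z` on the Riemann sphere. -/
def sphInv (z : RS) : RS :=
  if z = (∞ : RS) then ((0 : ℂ) : RS)
  else if sphToC z = 0 then (∞ : RS) else (((sphToC z)⁻¹ : ℂ) : RS)

/-- Mean-value-property definition of harmonicity on a planar set. -/
def HarmonicOnC (h : ℂ → ℝ) (D : Set ℂ) : Prop :=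
  ContinuousOn h D ∧ ∀ z ∈ D, ∀ r : ℝ, 0 < r → closedBall z r ⊆ D →
    h z = (2 * Real.pi)⁻¹ *
      ∫ θ in (0:ℝ)..(2 * Real.pi), h (z + (r : ℂ) * Complex.exp ((θ : ℂ) * Complex.I))

/-- Harmonicity on a subset of the Riemann sphere, via the two standard charts. -/
def HarmonicOnS (h : RS → ℝ) (D : Set RS) : Prop :=
  HarmonicOnC (fun x : ℂ => h (x : RS)) {x : ℂ | (x : RS) ∈ D} ∧
  HarmonicOnC (fun x : ℂ => h (sphInv (x : RS))) {x : ℂ | sphInv (x : RS) ∈ D}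

/-- `ω` is the harmonic measure of `D ⊆ Ĉ` at `a` (for disconnected `D`, the harmonic
measure of the component of `D` containing `a`). -/
def IsHarmonicMeasureS (D : Set RS) (a : RS) (ω : Measure RS) : Prop :=
  a ∈ D ∧ IsProbabilityMeasure ω ∧ ω ((frontier D)ᶜ) = 0 ∧
  ∀ h : RS → ℝ, HarmonicOnS h D → ContinuousOn h (closure D) →
    ∫ x, h x ∂ω = h a

/-- `ω` is the harmonic measure of the planar domain `D` at `a`. -/
def IsHarmonicMeasureC (D : Set ℂ) (a : ℂ) (ω : Measure ℂ) : Prop :=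
  a ∈ D ∧ IsProbabilityMeasure ω ∧ ω ((frontier D)ᶜ) = 0 ∧
  ∀ h : ℂ → ℝ, HarmonicOnC h D → ContinuousOn h (closure D) →
    ∫ x, h x ∂ω = h a

/-- The logarithmic kernel `log (1/|z-w|)`. -/
def logKer (z w : ℂ) : ℝ := Real.log (1 / dist z w)

/-- Mutual logarithmic energy `∬ log (1/|z-w|) dμ(z) dν(w)` as an extended real number. -/
def mutualEnergy (μ ν : Measure ℂ) : EReal :=
  ENNReal.toEReal (∫⁻ q : ℂ × ℂ, ENNReal.ofReal (logKer q.1 q.2) ∂(μ.prod ν)) -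
  ENNReal.toEReal (∫⁻ q : ℂ × ℂ, ENNReal.ofReal (-(logKer q.1 q.2)) ∂(μ.prod ν))

/-- Logarithmic energy of a measure. -/
def energyI (μ : Measure ℂ) : EReal := mutualEnergy μ μ

/-- Equilibrium energy of a set: infimum of the energies of Borel probability
measures supported on it. -/
def eqEnergy (K : Set ℂ) : EReal :=
  ⨅ (μ : Measure ℂ) (_ : IsProbabilityMeasure μ) (_ : μ Kᶜ = 0), energyI μ

/-- Logarithmic capacity `cap K = e^{-I(K)}`. -/
def logCap (K : Set ℂ) : ℝ :=
  if eqEnergy K = ⊤ then 0 else Real.exp (-(eqEnergy K).toReal)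

/-- The rational function `z ↦ ∑ i, a i / (z - p i)`. -/
def ratSum {d : ℕ} (a p : Fin d → ℂ) (z : ℂ) : ℂ := ∑ i, a i / (z - p i)

/-- Riemann-sphere-valued evaluation of `ratSum` (value `∞` at the poles). -/
def ratSumS {d : ℕ} (a p : Fin d → ℂ) (z : ℂ) : RS :=
  if z ∈ Set.range p then (∞ : RS) else ((ratSum a p z : ℂ) : RS)

/-- The lemniscate `{z ∈ ℂ : |R(z)| ≥ t}` of `R = ∑ a i / (z - p i)`;
the poles belong to it. -/
def lemniscate {d : ℕ} (a p : Fin d → ℂ) (t : ℝ) : Set ℂ :=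
  {z : ℂ | z ∈ Set.range p ∨ t ≤ ‖ratSum a p z‖}

/-- `Ω = R⁻¹(𝔻) ⊆ Ĉ` for `R = ∑ a i / (z - p i)` (it contains `∞` since `R(∞)=0`). -/
def ratSumDomain {d : ℕ} (a p : Fin d → ℂ) : Set RS :=
  {(∞ : RS)} ∪ (fun x : ℂ => (x : RS)) ''
    {z : ℂ | z ∉ Set.range p ∧ ‖ratSum a p z‖ < 1}

/-- An analytic Jordan curve: the image of the unit circle under an injective
analytic map with non-vanishing derivative, defined near the circle. -/
def IsAnalyticJordanCurve (J : Set ℂ) : Prop :=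
  ∃ (U : Set ℂ) (f : ℂ → ℂ), IsOpen U ∧ sphere (0:ℂ) 1 ⊆ U ∧ AnalyticOnNhd ℂ f U ∧
    Set.InjOn f (sphere (0:ℂ) 1) ∧ (∀ z ∈ sphere (0:ℂ) 1, deriv f z ≠ 0) ∧
    f '' sphere (0:ℂ) 1 = J

/-- A (topological) Jordan curve. -/
def IsJordanCurve (J : Set ℂ) : Prop :=
  ∃ f : ℂ → ℂ, ContinuousOn f (sphere (0:ℂ) 1) ∧ Set.InjOn f (sphere (0:ℂ) 1) ∧
    f '' sphere (0:ℂ) 1 = J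

/-- A bounded Jordan domain. -/
def IsJordanDomain (D : Set ℂ) : Prop :=
  IsOpen D ∧ IsConnected D ∧ Bornology.IsBounded D ∧ IsJordanCurve (frontier D)

/-- `R = ∑ a i / (z - p i)` is a `d`-good rational function: it has degree `d`
(the residues are nonzero and the poles are distinct), `R(∞) = 0`, and
`Ω = R⁻¹(𝔻)` is connected and bounded by `d` disjoint analytic Jordan curves,
the `i`-th of which surrounds the pole `p i`. -/
structure IsGoodRat (d : ℕ) (a p : Fin d → ℂ) : Prop where
  residue_ne : ∀ i, a i ≠ 0
  poles_inj : Function.Injective p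
  conn : IsConnected (ratSumDomain a p)
  curves : ∃ γ : Fin d → Set ℂ, (∀ i, IsAnalyticJordanCurve (γ i)) ∧
    (Pairwise fun i j => Disjoint (γ i) (γ j)) ∧
    frontier (ratSumDomain a p) = (fun x : ℂ => (x : RS)) '' ⋃ i, γ i ∧
    ∀ i, p i ∉ γ i ∧ Bornology.IsBounded (connectedComponentIn ((γ i)ᶜ) (p i))

/-- Evaluation of the rational function `P/Q` on the Riemann sphere. -/
def ratEval (P Q : Polynomial ℂ) : RS → RS := fun z =>
  if z = (∞ : RS) then
    (if Q.natDegree < P.natDegree then (∞ : RS)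
     else ((P.coeff Q.natDegree / Q.leadingCoeff : ℂ) : RS))
  else
    (if Q.eval (sphToC z) = 0 then (∞ : RS)
     else ((P.eval (sphToC z) / Q.eval (sphToC z) : ℂ) : RS))

/-- `g` has a zero of exact order `m` at `x`. -/
def HasZeroOrderAt (g : ℂ → ℂ) (x : ℂ) (m : ℕ) : Prop :=
  ∃ c : ℂ, c ≠ 0 ∧ Filter.Tendsto (fun y : ℂ => g y / (y - x) ^ m) (𝓝[≠] x) (𝓝 c)

/-- `f : Ĉ → ℂ` has a zero of exact order `m` at `z ∈ Ĉ`. -/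
def ZeroOrderAtS (f : RS → ℂ) (z : RS) (m : ℕ) : Prop :=
  (z = (∞ : RS) → HasZeroOrderAt (fun x : ℂ => f (sphInv (x : RS))) 0 m) ∧
  ∀ x : ℂ, z = (x : RS) → HasZeroOrderAt (fun y : ℂ => f (y : RS)) x m

/-- Holomorphy on a subset of the Riemann sphere (in both charts). -/
def HolomorphicOnS (f : RS → ℂ) (D : Set RS) : Prop :=
  DifferentiableOn ℂ (fun x : ℂ => f (x : RS)) {x : ℂ | (x : RS) ∈ D} ∧
  DifferentiableOn ℂ (fun x : ℂ => f (sphInv (x : RS))) {x : ℂ | sphInv (x : RS) ∈ D}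

/-- `f` is a proper map from `D` into the open unit disc. -/
def IsProperToDisc (f : RS → ℂ) (D : Set RS) : Prop :=
  Set.MapsTo f D (ball (0:ℂ) 1) ∧
  ∀ L : Set ℂ, L ⊆ ball (0:ℂ) 1 → IsCompact L → IsCompact {z ∈ D | f z ∈ L}

/-- `G` is the Green function of `D ⊆ Ĉ` with pole at `∞` (extended by `0` off `D`):
it is positive and harmonic on `D ∖ {∞}`, `G(z) - log|z|` has a finite limit at `∞`,
and `G` tends to `0` at every boundary point. -/
def IsGreenPoleInf (D : Set RS) (G : RS → ℝ) : Prop :=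
  (∞ : RS) ∈ D ∧
  HarmonicOnS G (D \ {(∞ : RS)}) ∧
  (∀ z ∈ D, z ≠ (∞ : RS) → 0 < G z) ∧
  (∀ z ∉ D, G z = 0) ∧
  (∀ w ∈ frontier D, Filter.Tendsto G (𝓝[D] w) (𝓝 0)) ∧
  ∃ L : ℝ, Filter.Tendsto (fun x : ℂ => G (x : RS) - Real.log ‖x‖)
    (Bornology.cobounded ℂ) (𝓝 L)

end
noncomputable section

/-- The residues of the rational function `R_p` of the counterexample. -/
def aVec (a η p : ℝ) : Fin 3 → ℂ :=
  ![(a : ℂ), ((p - p ^ η : ℝ) : ℂ), ((p - p ^ η : ℝ) : ℂ)]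

/-- The poles `p`, `ip`, `-ip` of the rational function `R_p` of the counterexample. -/
def pVec (p : ℝ) : Fin 3 → ℂ :=
  ![(p : ℂ), (p : ℂ) * Complex.I, -((p : ℂ) * Complex.I)]

/-- `R_p(z) = a/(z-p) + (p-p^η)/(z-ip) + (p-p^η)/(z+ip)`. -/
def Rpfun (a η p : ℝ) (z : ℂ) : ℂ :=
  (a : ℂ) / (z - (p : ℂ)) + ((p - p ^ η : ℝ) : ℂ) / (z - (p : ℂ) * Complex.I)
    + ((p - p ^ η : ℝ) : ℂ) / (z + (p : ℂ) * Complex.I)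

end

/-!
On the real axis the two conjugate poles `±ip` contribute `2(p - p^η)x/(x² + p²)`, so `R_p` is
real there, and clearing the positive denominator `p t ((1+t)² + 1)` turns `R_p(p + pt) ≥ 1` into
the cubic inequality. For `0 < t ≤ τ := a p^(-η)/2` we have `2p^η t ≤ a`, so the cubic is at most
`a + pτ³ + aτ = a + a³p^(1-3η)/8 + a²p^(-η)/2`, which is `≤ 2a` for large `p` because `η > 1/3`.
Since `x = p + pt` with `t ≤ τ` exactly when `x ≤ p + a p^(1-η)/2`, this covers the interval;
its left end point is the pole `p`.
-/

theorem Complex.inv_add_inv_conj (z : ℂ) :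
    z⁻¹ + (starRingEnd ℂ z)⁻¹ = ((2 * z.re / normSq z : ℝ) : ℂ) := by
  rw [inv_def, inv_def, normSq_conj, conj_conj, ← add_mul, add_comm, add_conj]
  push_cast
  ring

theorem ratSum_aVec_pVec (a η p : ℝ) (z : ℂ) :
    ratSum (aVec a η p) (pVec p) z = Rpfun a η p z := by
  simp [ratSum, aVec, pVec, Rpfun, Fin.sum_univ_three, sub_neg_eq_add]

theorem Rpfun_ofReal (a η p x : ℝ) :
    Rpfun a η p x = ((a / (x - p) + 2 * (p - p ^ η) * x / (x ^ 2 + p ^ 2) : ℝ) : ℂ) := by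
  have hconj : starRingEnd ℂ ((x : ℂ) - p * I) = x + p * I := by simp
  have hpair := Complex.inv_add_inv_conj ((x : ℂ) - p * I)
  rw [hconj] at hpair
  have hre : ((x : ℂ) - p * I).re = x := by simp
  have hnormSq : normSq ((x : ℂ) - p * I) = x ^ 2 + p ^ 2 := by
    rw [normSq_apply]
    simp only [sub_re, ofReal_re, mul_re, I_re, mul_zero, ofReal_im, I_im, mul_one, sub_self,
      sub_zero, sub_im, mul_im, add_zero, zero_sub, mul_neg, neg_mul, neg_neg]
    ring
  rw [hre, hnormSq] at hpair
  simp only [Rpfun, div_eq_mul_inv, add_assoc, ← mul_add, hpair]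
  push_cast
  ring

theorem one_le_slice_iff {a q p t : ℝ} (hp : 0 < p) (ht : 0 < t) :
    1 ≤ a / (p + p * t - p) + 2 * (p - q) * (p + p * t) / ((p + p * t) ^ 2 + p ^ 2) ↔
      p * t ^ 3 + (2 * q - a) * t ^ 2 + 2 * (q - a) * t ≤ 2 * a := by
  have hden : 0 < p * t * ((1 + t) ^ 2 + 1) := by positivity
  have hsplit : a / (p + p * t - p) + 2 * (p - q) * (p + p * t) / ((p + p * t) ^ 2 + p ^ 2)
      = 1 + (2 * a - (p * t ^ 3 + (2 * q - a) * t ^ 2 + 2 * (q - a) * t))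
        / (p * t * ((1 + t) ^ 2 + 1)) := by
    have : p + p * t - p = p * t := by ring
    rw [this]
    field_simp
    ring
  rw [hsplit, le_add_iff_nonneg_right, le_div_iff₀ hden, zero_mul, sub_nonneg]

theorem slice_cubic_le {a q p t τ : ℝ} (ha : 0 ≤ a) (hq : 0 ≤ q) (hp : 0 ≤ p) (ht : 0 ≤ t)
    (htτ : t ≤ τ) (hqτ : 2 * q * τ ≤ a) (hsmall : p * τ ^ 3 + a * τ ≤ a) :
    p * t ^ 3 + (2 * q - a) * t ^ 2 + 2 * (q - a) * t ≤ 2 * a := by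
  have hqt : 2 * q * t ≤ a := by nlinarith
  have hcube : p * t ^ 3 ≤ p * τ ^ 3 := by gcongr
  nlinarith [mul_le_mul_of_nonneg_right hqt ht, mul_nonneg ha ht, mul_nonneg ha (sq_nonneg t)]

theorem eventually_slice_small {a η : ℝ} (ha : 0 < a) (hη : 1 / 3 < η) :
    ∀ᶠ p : ℝ in atTop, p * (a * p ^ (-η) / 2) ^ 3 + a * (a * p ^ (-η) / 2) < a := by
  have hrpow : ∀ᶠ p : ℝ in atTop,
      a ^ 3 / 8 * p ^ (-(3 * η - 1)) + a ^ 2 / 2 * p ^ (-η)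
        = p * (a * p ^ (-η) / 2) ^ 3 + a * (a * p ^ (-η) / 2) := by
    filter_upwards [eventually_gt_atTop 0] with p hp
    have hexp : p ^ (-(3 * η - 1)) = p * (p ^ (-η)) ^ 3 := by
      rw [show -(3 * η - 1) = 1 + -η * (3 : ℕ) by push_cast; ring, Real.rpow_add hp,
        Real.rpow_one, Real.rpow_mul_natCast hp.le]
    rw [hexp]
    ring
  have hlim : Tendsto (fun p : ℝ => a ^ 3 / 8 * p ^ (-(3 * η - 1)) + a ^ 2 / 2 * p ^ (-η))
      atTop (𝓝 0) := by
    have h := ((tendsto_rpow_neg_atTop (by linarith : 0 < 3 * η - 1)).const_mul (a ^ 3 / 8)).add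
      ((tendsto_rpow_neg_atTop (by linarith : 0 < η)).const_mul (a ^ 2 / 2))
    simpa only [mul_zero, add_zero] using h
  exact (hlim.congr' hrpow).eventually_lt_const ha

theorem ofReal_mem_lemniscate {a η p x : ℝ} (ha : 0 < a) (hp : 0 < p)
    (hsmall : p * (a * p ^ (-η) / 2) ^ 3 + a * (a * p ^ (-η) / 2) ≤ a)
    (hx : x ∈ Icc p (p + a * p ^ (1 - η) / 2)) :
    (x : ℂ) ∈ lemniscate (aVec a η p) (pVec p) 1 := by
  rcases hx.1.eq_or_lt with rfl | hpx
  · exact Or.inl ⟨0, rfl⟩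
  obtain ⟨t, ht, rfl⟩ : ∃ t, 0 < t ∧ x = p + p * t :=
    ⟨(x - p) / p, div_pos (sub_pos.2 hpx) hp, by field_simp; ring⟩
  have hrpow : p ^ (1 - η) = p * p ^ (-η) := by
    rw [sub_eq_add_neg, Real.rpow_add hp, Real.rpow_one]
  have htτ : t ≤ a * p ^ (-η) / 2 := by
    have := hx.2
    rw [hrpow] at this
    nlinarith
  have hqτ : 2 * p ^ η * (a * p ^ (-η) / 2) = a := by
    rw [Real.rpow_neg hp.le]
    field_simp
  refine Or.inr ?_
  rw [ratSum_aVec_pVec, Rpfun_ofReal, norm_real, Real.norm_eq_abs]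
  refine le_trans ?_ (le_abs_self _)
  exact (one_le_slice_iff hp ht).2
    (slice_cubic_le ha.le (by positivity) hp.le ht.le htτ hqτ.le hsmall)

/-- For `a > 0`, `η ∈ (2/3, 1)`, `p > 1` and `t > 0`, the value
`R_p(p + pt)` is real, and `R_p(p + pt) ≥ 1` if and only if
`p t³ + (2p^η - a) t² + 2(p^η - a) t ≤ 2a`. Moreover there exists `p₀ = p₀(a,η)`
such that for all `p > p₀` the set `{z : |R_p z| ≥ 1}` (with the pole `p` included)
contains the real interval `[p, p + a p^(1-η)/2]`. -/
theorem counterexample_real_slice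
    (a η : ℝ) (ha : 0 < a) (hη : η ∈ Set.Ioo (2/3 : ℝ) 1) :
    (∀ p : ℝ, 1 < p → ∀ t : ℝ, 0 < t →
      (Rpfun a η p ((p : ℂ) + (p : ℂ) * (t : ℂ))).im = 0 ∧
      (1 ≤ (Rpfun a η p ((p : ℂ) + (p : ℂ) * (t : ℂ))).re ↔
        p * t ^ 3 + (2 * p ^ η - a) * t ^ 2 + 2 * (p ^ η - a) * t ≤ 2 * a)) ∧
    ∃ p₀ : ℝ, 1 ≤ p₀ ∧ ∀ p : ℝ, p₀ < p →
      ∀ x : ℝ, x ∈ Set.Icc p (p + a * p ^ (1 - η) / 2) →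
        (x : ℂ) ∈ lemniscate (aVec a η p) (pVec p) 1 := by
  refine ⟨fun p hp t ht => ?_, ?_⟩
  · have hz : (p : ℂ) + p * t = ((p + p * t : ℝ) : ℂ) := by push_cast; rfl
    rw [hz, Rpfun_ofReal, ofReal_im, ofReal_re]
    exact ⟨rfl, one_le_slice_iff (by linarith) ht⟩
  · obtain ⟨N, hN⟩ :=
      eventually_atTop.1 (eventually_slice_small (η := η) ha (by linarith [hη.1]))
    refine ⟨max 1 N, le_max_left _ _, fun p hp x hx => ?_⟩
    rw [max_lt_iff] at hp
    exact ofReal_mem_lemniscate ha (by linarith) (hN p hp.2.le).le hx
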